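/- arXiv:1301.3158 — 2 statements merged into one kernel-verified Lean document; each statement's English description precedes it below -/
import Mathlib

section
/- Suppose g : (a, 0] → ℝ is differentiable and positive, and g'(t) > -8·g(t)² for all t in (a,0]. Then for every t ∈ (a, 0] with -1/(8·g(0)) < t ≤ 0, one has g(t) < g(0)/(1 + 8·g(0)·t). -/
theorem stmt_4 (a : ℝ) (ha : a < 0) (g g' : ℝ → ℝ)
    (hderiv : ∀ t ∈ Set.Ioc a 0, HasDerivAt g (g' t) t)
    (hpos : ∀ t ∈ Set.Ioc a 0, 0 < g t)
    (hineq : ∀ t ∈ Set.Ioo a 0, g' t > -8 * g t ^ 2)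
    (hineq0 : g' 0 ≥ -8 * g 0 ^ 2) :
    ∀ t ∈ Set.Ioo a 0, -1 / (8 * g 0) < t →
      g t < g 0 / (1 + 8 * g 0 * t) := by
  intro t ht htlb
  obtain ⟨hat, ht0⟩ := ht
  have h0mem : (0:ℝ) ∈ Set.Ioc a 0 := ⟨ha, le_refl 0⟩
  have hg0 : 0 < g 0 := hpos 0 h0mem
  have hsub : Set.Icc t 0 ⊆ Set.Ioc a 0 := fun x hx => ⟨lt_of_lt_of_le hat hx.1, hx.2⟩
  -- f = 1/g
  have hfderiv : ∀ x ∈ Set.Ioo t 0, HasDerivAt (fun s => (g s)⁻¹) (-g' x / g x ^ 2) x := by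
    intro x hx
    have hxmem : x ∈ Set.Ioc a 0 := ⟨hat.trans hx.1, hx.2.le⟩
    exact (hderiv x hxmem).inv (hpos x hxmem).ne'
  have hcont : ContinuousOn (fun s => (g s)⁻¹) (Set.Icc t 0) := by
    intro x hx
    exact (((hderiv x (hsub hx)).continuousAt).continuousWithinAt).inv₀ (hpos x (hsub hx)).ne'
  obtain ⟨c, hc, hceq⟩ := exists_hasDerivAt_eq_slope (fun s => (g s)⁻¹)
    (fun x => -g' x / g x ^ 2) ht0 hcont hfderiv
  have hcmem : c ∈ Set.Ioo a 0 := ⟨hat.trans hc.1, hc.2⟩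
  have hgc : 0 < g c := hpos c ⟨hcmem.1, hcmem.2.le⟩
  have hgc' : g' c > -8 * g c ^ 2 := hineq c hcmem
  have hslope : -g' c / g c ^ 2 < 8 := by
    rw [div_lt_iff₀ (by positivity)]
    nlinarith
  rw [hceq] at hslope
  have hgt : 0 < g t := hpos t ⟨hat, ht0.le⟩
  -- from hslope: ((g 0)⁻¹ - (g t)⁻¹)/(0 - t) < 8
  have h1 : (g 0)⁻¹ - (g t)⁻¹ < 8 * (0 - t) := by
    have h0t : (0:ℝ) - t > 0 := by linarith
    calc (g 0)⁻¹ - (g t)⁻¹ = ((g 0)⁻¹ - (g t)⁻¹) / (0 - t) * (0 - t) := by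
          rw [div_mul_cancel₀ _ (by linarith : (0:ℝ) - t ≠ 0)]
      _ < 8 * (0 - t) := by
          apply mul_lt_mul_of_pos_right hslope h0t
  have hden : 0 < 1 + 8 * g 0 * t := by
    rw [div_lt_iff₀ (by positivity)] at htlb
    linarith
  have hkey : g t * (1 + 8 * g 0 * t) < g 0 := by
    have e1 : (g 0)⁻¹ = 1 / g 0 := (one_div _).symm
    have e2 : (g t)⁻¹ = 1 / g t := (one_div _).symm
    rw [e1, e2, div_sub_div _ _ hg0.ne' hgt.ne', div_lt_iff₀ (by positivity)] at h1
    nlinarith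
  rw [lt_div_iff₀ hden]
  exact hkey
end

section
/- Suppose the real sequences (x_j(t)) satisfy x_k'(t) = Σ'_{j≠k} 2/(x_k(t) - x_j(t)) with x_{-j}(t) = -x_j(t), all x_j(t) distinct and nonzero. Then x₁'(t) = 1/x₁(t) - f(t)·x₁(t), where f(t) = Σ'_{j≠±1} 2/((x_{-1}(t) - x_j(t))·(x_1(t) - x_j(t))). -/
/-!
At a fixed time the velocity of `x 1` is `∑' j ≠ 0, 1, 2 / (x 1 - x j)`. The term `j = -1` equals
`1 / x 1` because `x (-1) = -x 1`. The remaining index set `j ≠ 0, ±1` is invariant under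
`j ↦ -j`, so the remaining sum is half the sum of `2 / (x 1 - x j) + 2 / (x 1 + x j)`, and each
such pair equals `-2 x 1 · 2 / ((x (-1) - x j) (x 1 - x j))`.
-/

open Set

section Symmetrize

variable {α β : Type*} [AddCommMonoid α] [TopologicalSpace α] [ContinuousAdd α] [T2Space α]

theorem Summable.tsum_add_comp_equiv {f : β → α} (hf : Summable f) (e : β ≃ β) :
    ∑' b, (f b + f (e b)) = 2 • ∑' b, f b := by
  rw [Summable.tsum_add (g := fun b => f (e b)) hf (e.summable_iff.2 hf), e.tsum_eq, two_nsmul]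

theorem Summable.tsum_subtype_add_neg [InvolutiveNeg β] {s : Set β} (hs : ∀ b, b ∈ s ↔ -b ∈ s)
    {f : β → α} (hf : Summable (f ∘ (↑) : s → α)) :
    ∑' b : s, (f b + f (-b)) = 2 • ∑' b : s, f b :=
  hf.tsum_add_comp_equiv ((Equiv.neg β).subtypeEquiv hs)

end Symmetrize

theorem two_div_sub_add_two_div_sub_neg {K : Type*} [Field K] {a y : K} (hsub : a - y ≠ 0)
    (hadd : a + y ≠ 0) :
    2 / (a - y) + 2 / (a - -y) = -2 * a * (2 / ((-a - y) * (a - y))) := by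
  have hneg : -a - y ≠ 0 := by rw [← neg_add']; exact neg_ne_zero.2 hadd
  rw [sub_neg_eq_add]
  field_simp
  ring

section OddConfiguration

variable {y : ℤ → ℝ} (hodd : ∀ j, y (-j) = -y j)
  (hinj : ∀ i j, i ≠ 0 → j ≠ 0 → i ≠ j → y i ≠ y j)
include hodd hinj

theorem tsum_two_div_sub_eq_neg_mul_tsum
    (hs : Summable fun j : {j : ℤ // j ≠ 0 ∧ j ≠ 1 ∧ j ≠ -1} => 2 / (y 1 - y j)) :
    ∑' j : {j : ℤ // j ≠ 0 ∧ j ≠ 1 ∧ j ≠ -1}, 2 / (y 1 - y j) =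
      -y 1 * ∑' j : {j : ℤ // j ≠ 0 ∧ j ≠ 1 ∧ j ≠ -1}, 2 / ((y (-1) - y j) * (y 1 - y j)) := by
  set B : Set ℤ := {j | j ≠ 0 ∧ j ≠ 1 ∧ j ≠ -1}
  change ∑' j : B, 2 / (y 1 - y j) = -y 1 * ∑' j : B, 2 / ((y (-1) - y j) * (y 1 - y j))
  have hB : ∀ j, j ∈ B ↔ -j ∈ B := fun j => by simp only [B, mem_ofPred_eq]; omega
  have hpair : ∀ j : B, 2 / (y 1 - y j) + 2 / (y 1 - y (-j)) =
      -2 * y 1 * (2 / ((y (-1) - y j) * (y 1 - y j))) := by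
    rintro ⟨j, hj0, hj1, hjm⟩
    rw [hodd, hodd]
    refine two_div_sub_add_two_div_sub_neg
      (sub_ne_zero.2 (hinj 1 j one_ne_zero hj0 (Ne.symm hj1))) ?_
    rw [← sub_neg_eq_add, ← hodd]
    exact sub_ne_zero.2 (hinj 1 (-j) one_ne_zero (neg_ne_zero.2 hj0) (by omega))
  have h := (hs.tsum_subtype_add_neg (f := fun j => 2 / (y 1 - y j)) hB).symm
  rw [tsum_congr hpair, tsum_mul_left, two_nsmul] at h
  linarith

theorem tsum_two_div_sub_eq
    (hs : Summable fun j : {j : ℤ // j ≠ 0 ∧ j ≠ 1} => 2 / (y 1 - y j)) :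
    ∑' j : {j : ℤ // j ≠ 0 ∧ j ≠ 1}, 2 / (y 1 - y j) =
      1 / y 1 - (∑' j : {j : ℤ // j ≠ 0 ∧ j ≠ 1 ∧ j ≠ -1},
        2 / ((y (-1) - y j) * (y 1 - y j))) * y 1 := by
  set f : ℤ → ℝ := fun j => 2 / (y 1 - y j)
  have hsplit : {j : ℤ | j ≠ 0 ∧ j ≠ 1} = {-1} ∪ {j | j ≠ 0 ∧ j ≠ 1 ∧ j ≠ -1} := by
    ext j; simp only [mem_ofPred_eq, mem_union, mem_singleton_iff]; omega
  have hsB : Summable fun j : {j : ℤ // j ≠ 0 ∧ j ≠ 1 ∧ j ≠ -1} => f j := by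
    have hBA : {j : ℤ | j ≠ 0 ∧ j ≠ 1 ∧ j ≠ -1} ⊆ {j | j ≠ 0 ∧ j ≠ 1} :=
      fun _ hj => ⟨hj.1, hj.2.1⟩
    exact (hs.comp_injective (inclusion_injective hBA) :)
  have hy1 : y 1 ≠ 0 := by
    have h := hinj 1 (-1) one_ne_zero (by norm_num) (by norm_num)
    rw [hodd] at h
    exact fun h0 => h (by rw [h0, neg_zero])
  have hm1 : f (-1) = 1 / y 1 := by
    simp only [f, hodd, sub_neg_eq_add]
    field_simp
    ring
  change ∑' j : ({j | j ≠ 0 ∧ j ≠ 1} : Set ℤ), f j = _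
  rw [hsplit, Summable.tsum_union_disjoint (t := {j | j ≠ 0 ∧ j ≠ 1 ∧ j ≠ -1}) (by simp)
      ((finite_singleton _).summable f) hsB,
    tsum_singleton, hm1]
  change _ + ∑' j : {j : ℤ // j ≠ 0 ∧ j ≠ 1 ∧ j ≠ -1}, 2 / (y 1 - y j) = _
  rw [tsum_two_div_sub_eq_neg_mul_tsum hodd hinj hsB]
  ring

end OddConfiguration

theorem stmt_11_general (I : Set ℝ) (x : ℤ → ℝ → ℝ)
    (hanti : ∀ j : ℤ, ∀ t : ℝ, x (-j) t = -x j t)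
    (hdist : ∀ t ∈ I, ∀ i j : ℤ, i ≠ 0 → j ≠ 0 → i ≠ j → x i t ≠ x j t)
    (hsum : ∀ k : ℤ, k ≠ 0 → ∀ t ∈ I,
      Summable (fun j : {j : ℤ // j ≠ 0 ∧ j ≠ k} => 2 / (x k t - x j.1 t)))
    (hode : ∀ k : ℤ, k ≠ 0 → ∀ t ∈ I,
      HasDerivAt (x k) (∑' j : {j : ℤ // j ≠ 0 ∧ j ≠ k}, 2 / (x k t - x j.1 t)) t) :
    ∀ t ∈ I, HasDerivAt (x 1)
      (1 / x 1 t -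
        (∑' j : {j : ℤ // j ≠ 0 ∧ j ≠ 1 ∧ j ≠ -1},
          2 / ((x (-1) t - x j.1 t) * (x 1 t - x j.1 t))) * x 1 t) t := by
  intro t ht
  rw [← tsum_two_div_sub_eq (y := (x · t)) (fun j => hanti j t) (hdist t ht)
    (hsum 1 one_ne_zero t ht)]
  exact hode 1 one_ne_zero t ht

theorem stmt_11 (I : Set ℝ) (hI : IsOpen I) (x : ℤ → ℝ → ℝ)
    (hanti : ∀ j : ℤ, ∀ t : ℝ, x (-j) t = -x j t)
    (hdist : ∀ t ∈ I, ∀ i j : ℤ, i ≠ 0 → j ≠ 0 → i ≠ j → x i t ≠ x j t)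
    (hne : ∀ j : ℤ, j ≠ 0 → ∀ t ∈ I, x j t ≠ 0)
    (hsum : ∀ k : ℤ, k ≠ 0 → ∀ t ∈ I,
      Summable (fun j : {j : ℤ // j ≠ 0 ∧ j ≠ k} => 2 / (x k t - x j.1 t)))
    (hode : ∀ k : ℤ, k ≠ 0 → ∀ t ∈ I,
      HasDerivAt (x k) (∑' j : {j : ℤ // j ≠ 0 ∧ j ≠ k}, 2 / (x k t - x j.1 t)) t)
    (hfsum : ∀ t ∈ I, Summable (fun j : {j : ℤ // j ≠ 0 ∧ j ≠ 1 ∧ j ≠ -1} =>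
      2 / ((x (-1) t - x j.1 t) * (x 1 t - x j.1 t)))) :
    ∀ t ∈ I, HasDerivAt (x 1)
      (1 / x 1 t -
        (∑' j : {j : ℤ // j ≠ 0 ∧ j ≠ 1 ∧ j ≠ -1},
          2 / ((x (-1) t - x j.1 t) * (x 1 t - x j.1 t))) * x 1 t) t :=
  stmt_11_general I x hanti hdist hsum hode
end
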